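/- arXiv:2508.04480 — 2 statements merged into one kernel-verified Lean document; each statement's English description precedes it below -/
import Mathlib

section
/- Let A be a finite set of integers and τ > 0, and let S_τ = {s : (1_A ∘ 1_A)(s) ≥ τ}. Then E(S_τ) ≤ τ^{-4} · T₄(A), where T₄(A) = #{(a₁,...,a₄,a₁',...,a₄') ∈ A⁸ : a₁+a₂+a₃+a₄ = a₁'+a₂'+a₃'+a₄'}. -/
open Finset Pointwise

/-- `(1_A ∘ 1_A)(x)`: number of pairs `(a,b) ∈ A²` with `b - a = x`. -/
def dconv (A : Finset ℤ) (x : ℤ) : ℕ :=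
  ((A ×ˢ A).filter (fun p => p.2 - p.1 = x)).card

/-- Additive energy `E(S) = #{(s₁,s₂,s₃,s₄) ∈ S⁴ : s₁ - s₂ = s₃ - s₄}`. -/
def energy (S : Finset ℤ) : ℕ :=
  ((S ×ˢ S ×ˢ S ×ˢ S).filter (fun p => p.1 - p.2.1 = p.2.2.1 - p.2.2.2)).card

/-- `T₄(A)`: solutions of `a₁+a₂+a₃+a₄ = a₁'+a₂'+a₃'+a₄'` with all variables in `A`. -/
def T4 (A : Finset ℤ) : ℕ :=
  (((A ×ˢ A ×ˢ A ×ˢ A) ×ˢ (A ×ˢ A ×ˢ A ×ˢ A)).filter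
    (fun p => p.1.1 + p.1.2.1 + p.1.2.2.1 + p.1.2.2.2 =
              p.2.1 + p.2.2.1 + p.2.2.2.1 + p.2.2.2.2)).card

theorem energy_level_set_le_T4 (A : Finset ℤ) (τ : ℝ) (hτ : 0 < τ) :
    (energy ((A - A).filter (fun s => τ ≤ (dconv A s : ℝ))) : ℝ) ≤
      τ ^ (-4 : ℤ) * (T4 A : ℝ) := by
  classical
  set S := (A - A).filter (fun s => τ ≤ (dconv A s : ℝ)) with hS
  set F := ((S ×ˢ S ×ˢ S ×ˢ S).filter
    (fun p : ℤ × ℤ × ℤ × ℤ => p.1 - p.2.1 = p.2.2.1 - p.2.2.2)) with hF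
  set R : ℤ → Finset (ℤ × ℤ) := fun s => (A ×ˢ A).filter (fun q => q.2 - q.1 = s) with hR
  have hmemS : ∀ s ∈ S, τ ≤ (dconv A s : ℝ) := by
    intro s hs
    exact (Finset.mem_filter.mp hs).2
  -- the sigma set
  set G := F.sigma (fun p => R p.1 ×ˢ R p.2.1 ×ˢ R p.2.2.1 ×ˢ R p.2.2.2) with hG
  have hcardG : G.card = ∑ p ∈ F, (dconv A p.1) * (dconv A p.2.1) * (dconv A p.2.2.1)
      * (dconv A p.2.2.2) := by
    rw [hG, Finset.card_sigma]
    refine Finset.sum_congr rfl fun p _ => ?_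
    simp [Finset.card_product, dconv, hR, mul_assoc, mul_comm, mul_left_comm]
  -- injection into T4
  have hinj : G.card ≤ T4 A := by
    apply Finset.card_le_card_of_injOn
      (fun x => ((x.2.1.2, x.2.2.1.1, x.2.2.2.1.1, x.2.2.2.2.2),
                 (x.2.1.1, x.2.2.1.2, x.2.2.2.1.2, x.2.2.2.2.1)))
    · intro x hx
      obtain ⟨p, q⟩ := x
      rw [Finset.mem_coe, hG, Finset.mem_sigma] at hx
      simp only [hF, Finset.mem_filter, Finset.mem_product, hR] at hx
      obtain ⟨⟨-, heq⟩, ⟨⟨h1A, h1B⟩, h1e⟩, ⟨⟨h2A, h2B⟩, h2e⟩, ⟨⟨h3A, h3B⟩, h3e⟩,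
        ⟨⟨h4A, h4B⟩, h4e⟩⟩ := hx
      simp only [T4, Finset.mem_coe, Finset.mem_filter, Finset.mem_product]
      refine ⟨⟨⟨h1B, h2A, h3A, h4B⟩, ⟨h1A, h2B, h3B, h4A⟩⟩, ?_⟩
      omega
    · intro x hx y hy hxy
      obtain ⟨p, q1, q2, q3, q4⟩ := x
      obtain ⟨p', r1, r2, r3, r4⟩ := y
      rw [Finset.mem_coe, hG, Finset.mem_sigma] at hx
      rw [Finset.mem_coe, hG, Finset.mem_sigma] at hy
      simp only [hF, Finset.mem_filter, Finset.mem_product, hR] at hx hy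
      obtain ⟨-, ⟨-, h1e⟩, ⟨-, h2e⟩, ⟨-, h3e⟩, ⟨-, h4e⟩⟩ := hx
      obtain ⟨-, ⟨-, g1e⟩, ⟨-, g2e⟩, ⟨-, g3e⟩, ⟨-, g4e⟩⟩ := hy
      simp only [Prod.mk.injEq] at hxy
      obtain ⟨⟨e1, e2, e3, e4⟩, e5, e6, e7, e8⟩ := hxy
      have hq1 : q1 = r1 := Prod.ext e5 e1
      have hq2 : q2 = r2 := Prod.ext e2 e6
      have hq3 : q3 = r3 := Prod.ext e3 e7
      have hq4 : q4 = r4 := Prod.ext e8 e4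
      subst hq1 hq2 hq3 hq4
      have hp : p = p' := by
        obtain ⟨s1, s2, s3, s4⟩ := p
        obtain ⟨t1, t2, t3, t4⟩ := p'
        simp only at h1e h2e h3e h4e g1e g2e g3e g4e
        simp only [Prod.mk.injEq]
        omega
      subst hp
      rfl
  -- lower bound on each term
  have hlow : ∀ p ∈ F, τ ^ 4 ≤ ((dconv A p.1) * (dconv A p.2.1) * (dconv A p.2.2.1)
      * (dconv A p.2.2.2) : ℝ) := by
    intro p hp
    simp only [hF, Finset.mem_filter, Finset.mem_product] at hp
    obtain ⟨⟨h1, h2, h3, h4⟩, -⟩ := hp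
    have t1 := hmemS _ h1
    have t2 := hmemS _ h2
    have t3 := hmemS _ h3
    have t4 := hmemS _ h4
    calc τ ^ 4 = τ * τ * τ * τ := by ring
    _ ≤ _ := by gcongr
  have hsum : (F.card : ℝ) * τ ^ 4 ≤ (T4 A : ℝ) := by
    calc (F.card : ℝ) * τ ^ 4 = ∑ _p ∈ F, τ ^ 4 := by
          rw [Finset.sum_const, nsmul_eq_mul]
    _ ≤ ∑ p ∈ F, ((dconv A p.1) * (dconv A p.2.1) * (dconv A p.2.2.1)
        * (dconv A p.2.2.2) : ℝ) := Finset.sum_le_sum hlow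
    _ = (G.card : ℝ) := by rw [hcardG]; push_cast; ring
    _ ≤ (T4 A : ℝ) := by exact_mod_cast hinj
  have h4pos : (0 : ℝ) < τ ^ 4 := by positivity
  have hE : (energy S : ℝ) = (F.card : ℝ) := by rw [energy, hF]
  rw [hE, show τ ^ (-4 : ℤ) = (τ ^ 4)⁻¹ by rw [show (-4:ℤ) = -(4:ℕ) from rfl, zpow_neg, zpow_natCast],
    le_inv_mul_iff₀ h4pos]
  linarith [hsum]
end

section
/- Let A be a finite set of integers with |A| ≥ 2 that is convex: writing A = {a₁ < a₂ < ⋯ < a_n}, we have a_{i+2} - a_{i+1} > a_{i+1} - a_i for all applicable i. Then |A + A| ≥ c·|A|^{3/2} for some absolute constant c > 0. -/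
open Finset Pointwise

theorem garaev_convex_sumset :
    ∃ c : ℝ, 0 < c ∧ ∀ (n : ℕ) (a : ℕ → ℤ),
      2 ≤ n →
      (∀ i, i + 1 < n → a i < a (i + 1)) →
      (∀ i, i + 2 < n → a (i + 1) - a i < a (i + 2) - a (i + 1)) →
      c * (n : ℝ) ^ ((3 : ℝ) / 2) ≤
        (((Finset.image a (Finset.range n)) + (Finset.image a (Finset.range n))).card : ℝ) := by
  classical
  refine ⟨1/4, by norm_num, ?_⟩
  intro n a hn hmono hconv
  -- strict monotonicity of a on range n
  have amono : ∀ j, j < n → ∀ i, i < j → a i < a j := by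
    intro j
    induction j with
    | zero => intro _ i hi; exact absurd hi (Nat.not_lt_zero i)
    | succ j ih =>
      intro hj i hi
      rcases Nat.lt_succ_iff_lt_or_eq.mp hi with h | h
      · exact lt_trans (ih (by omega) i h) (hmono j hj)
      · subst h; exact hmono i hj
  have amono' : ∀ i j, i ≤ j → j < n → a i ≤ a j := by
    intro i j hij hj
    rcases eq_or_lt_of_le hij with h | h
    · subst h; exact le_refl _
    · exact le_of_lt (amono j hj i h)
  have ainj : ∀ q, q < n → ∀ q', q' < n → a q = a q' → q = q' := by
    intro q hq q' hq' h
    rcases lt_trichotomy q q' with hlt | he | hlt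
    · exact absurd h (ne_of_lt (amono q' hq' q hlt))
    · exact he
    · exact absurd h.symm (ne_of_lt (amono q hq q' hlt))
  -- gaps strictly increasing
  have dmono : ∀ j i, i < j → j + 1 < n → a (i+1) - a i < a (j+1) - a j := by
    intro j
    induction j with
    | zero => intro i hi _; exact absurd hi (Nat.not_lt_zero i)
    | succ j ih =>
      intro i hi hjn
      rcases Nat.lt_succ_iff_lt_or_eq.mp hi with h | h
      · exact lt_trans (ih i h (by omega)) (hconv j (by omega))
      · subst h; exact hconv i (by omega)
  have dle : ∀ i j, i ≤ j → j + 1 < n → a (i+1) - a i ≤ a (j+1) - a j := by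
    intro i j hij hj
    rcases eq_or_lt_of_le hij with h | h
    · subst h; exact le_refl _
    · exact le_of_lt (dmono j i h hj)
  -- telescoping
  have tele : ∀ p l : ℕ, (∑ s ∈ Finset.range l, (a (p+s+1) - a (p+s))) = a (p+l) - a p := by
    intro p l
    simpa [add_assoc] using Finset.sum_range_sub (fun s => a (p+s)) l
  -- window sum lower bound: a l - a 0 ≤ a (p+l) - a p
  have win_lb : ∀ p l : ℕ, p + l < n → a l - a 0 ≤ a (p+l) - a p := by
    intro p l hpl
    have t1 : (∑ s ∈ Finset.range l, (a (s+1) - a s)) = a l - a 0 := by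
      simpa using Finset.sum_range_sub (fun s => a s) l
    rw [← tele p l, ← t1]
    apply Finset.sum_le_sum
    intro s hs
    have hs' := Finset.mem_range.mp hs
    exact dle s (p+s) (Nat.le_add_left s p) (by omega)
  -- window sums of a fixed length strictly increase with position
  have win_strict : ∀ p p' l : ℕ, 0 < l → p < p' → p' + l < n →
      a (p+l) - a p < a (p'+l) - a p' := by
    intro p p' l hl hpp hpl
    rw [← tele p l, ← tele p' l]
    apply Finset.sum_lt_sum_of_nonempty
    · exact Finset.nonempty_range_iff.mpr (by omega)
    · intro s hs
      have hs' := Finset.mem_range.mp hs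
      exact dmono (p'+s) (p+s) (by omega) (by omega)
  -- k = floor sqrt n
  set k := Nat.sqrt n with hk
  have hk1 : 1 ≤ k := Nat.le_sqrt.mpr (by omega)
  have hkn : k < n := Nat.sqrt_lt_self (by omega)
  have hk2 : k * k ≤ n := Nat.le_sqrt.mp le_rfl
  -- rows
  set R : ℕ → Finset ℤ := fun u => (Finset.range n).image (fun q => a u + a q) with hR
  have hRcard : ∀ u, (R u).card = n := by
    intro u
    have hinj : Set.InjOn (fun q => a u + a q) (Finset.range n) := by
      intro q hq q' hq' hqq
      have hqq' : a q = a q' := by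
        simpa using hqq
      exact ainj q (Finset.mem_range.mp (Finset.mem_coe.mp hq)) q'
        (Finset.mem_range.mp (Finset.mem_coe.mp hq')) hqq'
    rw [hR, Finset.card_image_of_injOn hinj, Finset.card_range]
  have hRsub : ∀ u, u < n →
      R u ⊆ (Finset.image a (Finset.range n)) + (Finset.image a (Finset.range n)) := by
    intro u hu x hx
    rw [hR] at hx
    obtain ⟨q, hq, rfl⟩ := Finset.mem_image.mp hx
    exact Finset.add_mem_add (Finset.mem_image_of_mem a (Finset.mem_range.mpr hu))
      (Finset.mem_image_of_mem a hq)
  -- intersection bound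
  have inter_bound : ∀ u v, u < v → v < k → ((R u) ∩ (R v)).card ≤ k := by
    intro u v huv hvk
    have hvn : v < n := lt_trans hvk hkn
    have hun : u < n := lt_trans huv hvn
    have hauv : a u < a v := amono v hvn u huv
    set f : ℤ → ℕ := fun x =>
      (if h : ∃ q, q ∈ Finset.range n ∧ a u + a q = x then h.choose else 0) -
      (if h : ∃ p, p ∈ Finset.range n ∧ a v + a p = x then h.choose else 0) with hf
    have hsel : ∀ x ∈ R u ∩ R v, ∃ p q, q < n ∧ p < n ∧ a u + a q = x ∧ a v + a p = x ∧
        p < q ∧ f x = q - p := by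
      intro x hx
      have hx1 : x ∈ R u := (Finset.mem_inter.mp hx).1
      have hx2 : x ∈ R v := (Finset.mem_inter.mp hx).2
      have hq : ∃ q, q ∈ Finset.range n ∧ a u + a q = x := by
        simpa only [hR, Finset.mem_image] using hx1
      have hp : ∃ p, p ∈ Finset.range n ∧ a v + a p = x := by
        simpa only [hR, Finset.mem_image] using hx2
      have hqn : hq.choose < n := Finset.mem_range.mp hq.choose_spec.1
      have hpn : hp.choose < n := Finset.mem_range.mp hp.choose_spec.1
      have hxq : a u + a hq.choose = x := hq.choose_spec.2
      have hxp : a v + a hp.choose = x := hp.choose_spec.2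
      have hap : a hp.choose < a hq.choose := by linarith
      have hpq : hp.choose < hq.choose := by
        by_contra hcon
        push_neg at hcon
        have : a hq.choose ≤ a hp.choose := amono' _ _ hcon hpn
        linarith
      refine ⟨hp.choose, hq.choose, hqn, hpn, hxq, hxp, hpq, ?_⟩
      simp only [hf]
      rw [dif_pos hq, dif_pos hp]
    have hmaps : ∀ x ∈ R u ∩ R v, f x ∈ Finset.range k := by
      intro x hx
      obtain ⟨p, q, hqn, hpn, hxq, hxp, hpq, hfx⟩ := hsel x hx
      rw [hfx, Finset.mem_range]
      by_contra hge
      push_neg at hge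
      have hplq : p + (q - p) = q := by omega
      have h1 : a (q - p) - a 0 ≤ a q - a p := by
        have := win_lb p (q - p) (by omega)
        rwa [hplq] at this
      have hlv : v < q - p := lt_of_lt_of_le hvk hge
      have h2 : a v < a (q - p) := amono (q - p) (by omega) v hlv
      have h3 : a 0 ≤ a u := amono' 0 u (Nat.zero_le u) hun
      have h4 : a q - a p = a v - a u := by linarith
      linarith
    have hinj : Set.InjOn f ↑(R u ∩ R v) := by
      intro x hx y hy hxy
      obtain ⟨p, q, hqn, hpn, hxq, hxp, hpq, hfx⟩ := hsel x (Finset.mem_coe.mp hx)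
      obtain ⟨p', q', hqn', hpn', hyq, hyp, hpq', hfy⟩ := hsel y (Finset.mem_coe.mp hy)
      rw [hfx, hfy] at hxy
      have hEx : a q - a p = a v - a u := by linarith
      have hEy : a q' - a p' = a v - a u := by linarith
      rcases lt_trichotomy p p' with h | h | h
      · exfalso
        have hws := win_strict p p' (q - p) (by omega) h (by omega)
        rw [show p + (q - p) = q by omega, show p' + (q - p) = q' by omega] at hws
        linarith
      · subst h
        rw [← hxp, ← hyp]
      · exfalso
        have hws := win_strict p' p (q - p) (by omega) h (by omega)
        rw [show p' + (q - p) = q' by omega, show p + (q - p) = q by omega] at hws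
        linarith
    calc (R u ∩ R v).card ≤ (Finset.range k).card :=
          Finset.card_le_card_of_injOn f hmaps hinj
      _ = k := Finset.card_range k
  -- union of rows
  set U : ℕ → Finset ℤ := fun j => (Finset.range j).biUnion R with hU
  have hstep : ∀ j, j < k → (U j).card + n ≤ (U (j+1)).card + j * k := by
    intro j hjk
    have hU1 : U (j+1) = (U j) ∪ R j := by
      simp only [hU]
      rw [Finset.range_add_one, Finset.biUnion_insert]
      exact Finset.union_comm _ _
    have hint : ((U j) ∩ R j).card ≤ j * k := by
      have hsub2 : (U j) ∩ R j ⊆ (Finset.range j).biUnion (fun v => R v ∩ R j) := by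
        intro x hx
        obtain ⟨hxU, hxR⟩ := Finset.mem_inter.mp hx
        simp only [hU, Finset.mem_biUnion] at hxU
        obtain ⟨v, hv, hxv⟩ := hxU
        exact Finset.mem_biUnion.mpr ⟨v, hv, Finset.mem_inter.mpr ⟨hxv, hxR⟩⟩
      calc ((U j) ∩ R j).card
          ≤ ((Finset.range j).biUnion (fun v => R v ∩ R j)).card :=
            Finset.card_le_card hsub2
        _ ≤ ∑ v ∈ Finset.range j, (R v ∩ R j).card := Finset.card_biUnion_le
        _ ≤ ∑ v ∈ Finset.range j, k := by
            apply Finset.sum_le_sum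
            intro v hv
            exact inter_bound v j (Finset.mem_range.mp hv) hjk
        _ = j * k := by simp [Finset.sum_const, Finset.card_range]
    have hid := Finset.card_union_add_card_inter (U j) (R j)
    rw [← hU1, hRcard j] at hid
    -- hid : (U (j+1)).card + ((U j) ∩ R j).card = (U j).card + n
    linarith
  have hUk : ∀ j, j ≤ k → 2*(j*n) ≤ 2*(U j).card + j*j*k := by
    intro j
    induction j with
    | zero => intro _; simp
    | succ j ih =>
      intro hj
      have hjk : j < k := by omega
      have ih' := ih (by omega)
      have hstepj := hstep j hjk
      have e1 : 2*((j+1)*n) = 2*(j*n) + 2*n := by ring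
      have e2 : (j+1)*(j+1)*k = j*j*k + 2*(j*k) + k := by ring
      have h5 : 2*(j*n) + 2*n ≤ 2*(U j).card + j*j*k + 2*n := by omega
      have h6 : 2*(U j).card + 2*n ≤ 2*(U (j+1)).card + 2*(j*k) := by
        have := Nat.mul_le_mul_left 2 hstepj
        omega
      omega
  have hUsub : U k ⊆ (Finset.image a (Finset.range n)) + (Finset.image a (Finset.range n)) := by
    apply Finset.biUnion_subset.mpr
    intro u hu
    exact hRsub u (lt_trans (Finset.mem_range.mp hu) hkn)
  have hUcard : (U k).card ≤ ((Finset.image a (Finset.range n)) + (Finset.image a (Finset.range n))).card :=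
    Finset.card_le_card hUsub
  have hkkk : k*k*k ≤ k*n := by
    calc k*k*k ≤ n*k := Nat.mul_le_mul_right k hk2
      _ = k*n := Nat.mul_comm n k
  have hnk : k * n ≤ 2 * (((Finset.image a (Finset.range n)) + (Finset.image a (Finset.range n))).card) := by
    have h7 := hUk k le_rfl
    have h8 : 2*(U k).card ≤ 2*(((Finset.image a (Finset.range n)) + (Finset.image a (Finset.range n))).card) := by omega
    omega
  -- real arithmetic
  set m := ((Finset.image a (Finset.range n)) + (Finset.image a (Finset.range n))).card with hm
  have hn0 : (0:ℝ) < n := by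
    have : 0 < n := by omega
    exact_mod_cast this
  have hfin : (k:ℝ) * (n:ℝ) ≤ 2 * (m:ℝ) := by exact_mod_cast hnk
  have h32 : (n:ℝ) ^ ((3:ℝ)/2) = (n:ℝ) * (n:ℝ) ^ ((1:ℝ)/2) := by
    rw [show (3:ℝ)/2 = 1 + 1/2 by norm_num, Real.rpow_add hn0, Real.rpow_one]
  have hhalf : (n:ℝ) ^ ((1:ℝ)/2) ≤ (k:ℝ) + 1 := by
    have h2 := Nat.lt_succ_sqrt n
    have h1 : (n:ℝ) ≤ ((k:ℝ)+1)^2 := by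
      have h3 : (n:ℝ) < ((k:ℝ)+1) * ((k:ℝ)+1) := by exact_mod_cast h2
      nlinarith [h3]
    calc (n:ℝ) ^ ((1:ℝ)/2) ≤ (((k:ℝ)+1)^2) ^ ((1:ℝ)/2) :=
          Real.rpow_le_rpow (le_of_lt hn0) h1 (by norm_num)
      _ = (k:ℝ)+1 := by
          rw [show ((1:ℝ)/2) = ((2:ℕ):ℝ)⁻¹ by norm_num]
          exact Real.pow_rpow_inv_natCast (by positivity) (by norm_num)
  have hk1' : (1:ℝ) ≤ (k:ℝ) := by exact_mod_cast hk1
  rw [h32]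
  have c1 : (n:ℝ) * ((n:ℝ)^((1:ℝ)/2)) ≤ (n:ℝ) * ((k:ℝ)+1) :=
    mul_le_mul_of_nonneg_left hhalf (le_of_lt hn0)
  have c2 : (n:ℝ) * ((k:ℝ)+1) ≤ (n:ℝ) * (2*(k:ℝ)) :=
    mul_le_mul_of_nonneg_left (by linarith) (le_of_lt hn0)
  have c3 : (n:ℝ)*(2*(k:ℝ)) = 2*((k:ℝ)*(n:ℝ)) := by ring
  linarith
end
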